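/- There exist two connected simple graphs G and H on the vertex set Fin 5 that are not isomorphic and whose signless distance Laplacian matrices D^Q(G) = tr(G) + D(G) and D^Q(H) = tr(H) + D(H) have equal characteristic polynomials. -/

import Mathlib

open Matrix

noncomputable section

open scoped Classical

set_option maxRecDepth 8000

/-- Adjacency matrix of a simple graph on `Fin n`, over `ℤ`. -/
def adjMat {n : ℕ} (G : SimpleGraph (Fin n)) : Matrix (Fin n) (Fin n) ℤ :=
  Matrix.of fun u v => if G.Adj u v then 1 else 0

/-- Degree matrix: diagonal matrix of vertex degrees. -/
def degMat {n : ℕ} (G : SimpleGraph (Fin n)) : Matrix (Fin n) (Fin n) ℤ :=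
  Matrix.diagonal fun v => ∑ u, if G.Adj v u then (1 : ℤ) else 0

/-- Laplacian matrix `L(G) = deg(G) - A(G)`. -/
def lapMat {n : ℕ} (G : SimpleGraph (Fin n)) : Matrix (Fin n) (Fin n) ℤ :=
  degMat G - adjMat G

/-- Distance matrix: `(u,v)`-entry is the graph distance between `u` and `v`. -/
def distMat {n : ℕ} (G : SimpleGraph (Fin n)) : Matrix (Fin n) (Fin n) ℤ :=
  Matrix.of fun u v => (G.dist u v : ℤ)

/-- Transmission matrix: diagonal matrix of vertex transmissions. -/
def trMat {n : ℕ} (G : SimpleGraph (Fin n)) : Matrix (Fin n) (Fin n) ℤ :=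
  Matrix.diagonal fun u => ∑ v, (G.dist u v : ℤ)

/-- Distance Laplacian matrix `D^L(G) = tr(G) - D(G)`. -/
def distLap {n : ℕ} (G : SimpleGraph (Fin n)) : Matrix (Fin n) (Fin n) ℤ :=
  trMat G - distMat G

/-- Walk-type matrix of `M`: the `j`-th column is `M^j · e`, `e` the all-ones vector. -/
def walkMat {n : ℕ} (M : Matrix (Fin n) (Fin n) ℤ) : Matrix (Fin n) (Fin n) ℤ :=
  Matrix.of fun i j => (M ^ (j : ℕ)).mulVec 1 i

/-- Two integer matrices are equivalent over `ℤ` if `N = P·M·Q` with `P, Q ∈ GL_n(ℤ)`. -/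
def ZEquiv {n : ℕ} (M N : Matrix (Fin n) (Fin n) ℤ) : Prop :=
  ∃ P Q : Matrix.GeneralLinearGroup (Fin n) ℤ,
    N = (P : Matrix (Fin n) (Fin n) ℤ) * M * (Q : Matrix (Fin n) (Fin n) ℤ)


/-- Graph `G₅`: vertices 0,1 joined to everything; 2,3,4 pairwise non-adjacent. -/
def Gg : SimpleGraph (Fin 5) where
  Adj u v := u ≠ v ∧ (u = 0 ∨ u = 1 ∨ v = 0 ∨ v = 1)
  symm := by constructor; intro u v; revert u v; decide
  loopless := by constructor; intro v; revert v; decide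

/-- Graph `H₅`: complete graph on {0,1,2,3} with a pendant vertex 4 attached to 0. -/
def Hh : SimpleGraph (Fin 5) where
  Adj u v := u ≠ v ∧ ¬((u = 4 ∧ v ≠ 0) ∨ (v = 4 ∧ u ≠ 0))
  symm := by constructor; intro u v; revert u v; decide
  loopless := by constructor; intro v; revert v; decide

instance : DecidableRel Gg.Adj := fun u v =>
  inferInstanceAs (Decidable (u ≠ v ∧ (u = 0 ∨ u = 1 ∨ v = 0 ∨ v = 1)))

instance : DecidableRel Hh.Adj := fun u v =>
  inferInstanceAs (Decidable (u ≠ v ∧ ¬((u = 4 ∧ v ≠ 0) ∨ (v = 4 ∧ u ≠ 0))))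

lemma conn_of_hub (G : SimpleGraph (Fin 5)) (h : ∀ v : Fin 5, v ≠ 0 → G.Adj 0 v) :
    G.Connected := by
  rw [SimpleGraph.connected_iff]
  have r0 : ∀ w : Fin 5, G.Reachable 0 w := by
    intro w
    by_cases hw : w = 0
    · subst hw; exact SimpleGraph.Reachable.refl 0
    · exact (h w hw).reachable
  exact ⟨fun u v => (r0 u).symm.trans (r0 v), ⟨0⟩⟩

lemma Gg_conn : Gg.Connected := conn_of_hub _ (by decide)

lemma Hh_conn : Hh.Connected := conn_of_hub _ (by decide)

lemma dist_adj' {G : SimpleGraph (Fin 5)} {u v : Fin 5} (h : G.Adj u v) : G.dist u v = 1 :=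
  SimpleGraph.dist_eq_one_iff_adj.mpr h

lemma dist_two' {G : SimpleGraph (Fin 5)} (hc : G.Connected) {u v w : Fin 5}
    (hne : u ≠ v) (hna : ¬ G.Adj u v) (h1 : G.Adj u w) (h2 : G.Adj w v) :
    G.dist u v = 2 := by
  have hle : G.dist u v ≤ 2 := by
    simpa using SimpleGraph.dist_le
      (SimpleGraph.Walk.cons h1 (SimpleGraph.Walk.cons h2 SimpleGraph.Walk.nil))
  have hpos : 0 < G.dist u v := hc.pos_dist_of_ne hne
  have hne1 : G.dist u v ≠ 1 := fun h => hna (SimpleGraph.dist_eq_one_iff_adj.mp h)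
  omega

def DQG : Matrix (Fin 5) (Fin 5) ℤ :=
  !![4,1,1,1,1; 1,4,1,1,1; 1,1,6,2,2; 1,1,2,6,2; 1,1,2,2,6]

def DQH : Matrix (Fin 5) (Fin 5) ℤ :=
  !![4,1,1,1,1; 1,5,1,1,2; 1,1,5,1,2; 1,1,1,5,2; 1,2,2,2,7]

lemma Gg_dist : ∀ u v : Fin 5, (Gg.dist u v : ℤ) = (!![0,1,1,1,1; 1,0,1,1,1; 1,1,0,2,2; 1,1,2,0,2; 1,1,2,2,0] : Matrix (Fin 5) (Fin 5) ℤ) u v := by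
  intro u v
  fin_cases u <;> fin_cases v <;>
  first
    | (rw [SimpleGraph.dist_self]; decide)
    | (rw [dist_adj' (by decide)]; decide)
    | (rw [dist_two' Gg_conn (w := 0) (by decide) (by decide) (by decide) (by decide)]; decide)

lemma Hh_dist : ∀ u v : Fin 5, (Hh.dist u v : ℤ) = (!![0,1,1,1,1; 1,0,1,1,2; 1,1,0,1,2; 1,1,1,0,2; 1,2,2,2,0] : Matrix (Fin 5) (Fin 5) ℤ) u v := by
  intro u v
  fin_cases u <;> fin_cases v <;>
  first
    | (rw [SimpleGraph.dist_self]; decide)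
    | (rw [dist_adj' (by decide)]; decide)
    | (rw [dist_two' Hh_conn (w := 0) (by decide) (by decide) (by decide) (by decide)]; decide)

lemma Gg_DQ : trMat Gg + distMat Gg = DQG := by
  ext u v
  simp only [trMat, distMat, Matrix.add_apply, Matrix.of_apply, Matrix.diagonal_apply,
    Fin.sum_univ_five, Gg_dist]
  fin_cases u <;> fin_cases v <;> decide

lemma Hh_DQ : trMat Hh + distMat Hh = DQH := by
  ext u v
  simp only [trMat, distMat, Matrix.add_apply, Matrix.of_apply, Matrix.diagonal_apply,
    Fin.sum_univ_five, Hh_dist]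
  fin_cases u <;> fin_cases v <;> decide

open Polynomial in
lemma charpoly_conj {M N P : Matrix (Fin 5) (Fin 5) ℚ} (hP : P.det ≠ 0)
    (h : P * M = N * P) : M.charpoly = N.charpoly := by
  have hcm : N.charmatrix * P.map C = P.map C * M.charmatrix := by
    have hs : Matrix.scalar (Fin 5) (X : ℚ[X]) * P.map C
        = P.map C * Matrix.scalar (Fin 5) (X : ℚ[X]) :=
      (Matrix.scalar_commute (X : ℚ[X]) (fun r => Commute.all X r) (P.map C)).eq
    have e1 : N.charmatrix * P.map C
        = Matrix.scalar (Fin 5) (X : ℚ[X]) * P.map C - (N * P).map C := by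
      rw [Matrix.charmatrix, RingHom.mapMatrix_apply, sub_mul, Matrix.map_mul]
    have e2 : P.map C * M.charmatrix
        = P.map C * Matrix.scalar (Fin 5) (X : ℚ[X]) - (P * M).map C := by
      rw [Matrix.charmatrix, RingHom.mapMatrix_apply, mul_sub, Matrix.map_mul]
    rw [e1, e2, h, hs]
  have hdet : (P.map (C : ℚ → ℚ[X])).det = C P.det := (RingHom.map_det C P).symm
  have hd0 : (P.map (C : ℚ → ℚ[X])).det ≠ 0 := by
    rw [hdet]
    exact fun hx => hP (C_injective (by simpa using hx))
  have := congrArg Matrix.det hcm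
  rw [Matrix.det_mul, Matrix.det_mul] at this
  have h2 : (P.map (C : ℚ → ℚ[X])).det * M.charmatrix.det
      = (P.map (C : ℚ → ℚ[X])).det * N.charmatrix.det := by
    rw [← this, mul_comm]
  have h3 := mul_left_cancel₀ hd0 h2
  simpa [Matrix.charpoly] using h3

def Pm : Matrix (Fin 5) (Fin 5) ℚ :=
  !![6,-4,-3,-3,2; 1,6,-5,-4,1; -5,0,0,-1,-1; -4,1,-1,-1,-1; 0,-5,0,0,-5]

def Qm : Matrix (Fin 5) (Fin 5) ℚ :=
  !![-1/30, 1/10, 1/10, -2/5, 1/15;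
     -2/15, 3/20, 3/20, -7/20, 1/60;
     -1/6, 1/4, 5/4, -7/4, 1/12;
     1/30, -7/20, -27/20, 33/20, -7/60;
     2/15, -3/20, -3/20, 7/20, -13/60]

lemma PmQm : Pm * Qm = 1 := by
  ext i j
  fin_cases i <;> fin_cases j <;>
    (norm_num [Pm, Qm, Matrix.mul_apply, Fin.sum_univ_five, Matrix.one_apply,
      Matrix.vecHead, Matrix.vecTail, Matrix.cons_val_two, Matrix.cons_val_three, Matrix.cons_val_four]; try decide)

lemma charpoly_eq : DQG.charpoly = DQH.charpoly := by
  have hPdet : Pm.det ≠ 0 := by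
    refine left_ne_zero_of_mul_eq_one (b := Qm.det) ?_
    rw [← Matrix.det_mul, PmQm, Matrix.det_one]
  have hcomm : Pm * (DQG.map (Int.castRingHom ℚ)) = (DQH.map (Int.castRingHom ℚ)) * Pm := by
    ext i j
    fin_cases i <;> fin_cases j <;>
      norm_num [Pm, DQG, DQH, Matrix.mul_apply, Matrix.map_apply, Fin.sum_univ_five,
        Matrix.vecHead, Matrix.vecTail, Matrix.cons_val_two, Matrix.cons_val_three, Matrix.cons_val_four]
  have h1 : (DQG.map (Int.castRingHom ℚ)).charpoly = (DQH.map (Int.castRingHom ℚ)).charpoly :=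
    charpoly_conj hPdet hcomm
  rw [Matrix.charpoly_map, Matrix.charpoly_map] at h1
  refine Polynomial.map_injective (Int.castRingHom ℚ) (fun a b hab => ?_) h1
  have : (a : ℚ) = (b : ℚ) := by simpa using hab
  exact_mod_cast this

lemma not_iso : ¬ Nonempty (Gg ≃g Hh) := by
  rintro ⟨e⟩
  have h2 : ∀ a : Fin 5, ∃ x y : Fin 5, x ≠ y ∧ Gg.Adj a x ∧ Gg.Adj a y := by decide
  obtain ⟨x, y, hxy, hx, hy⟩ := h2 (e.symm 4)
  have hx' : Hh.Adj 4 (e x) := by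
    have := e.map_adj_iff.mpr hx
    rwa [e.apply_symm_apply] at this
  have hy' : Hh.Adj 4 (e y) := by
    have := e.map_adj_iff.mpr hy
    rwa [e.apply_symm_apply] at this
  have hz : ∀ z : Fin 5, Hh.Adj 4 z → z = 0 := by decide
  exact hxy (e.injective ((hz _ hx').trans (hz _ hy').symm))

theorem stmt7 :
    ∃ G H : SimpleGraph (Fin 5), G.Connected ∧ H.Connected ∧
      ¬ Nonempty (G ≃g H) ∧
      (trMat G + distMat G).charpoly = (trMat H + distMat H).charpoly := by
  exact ⟨Gg, Hh, Gg_conn, Hh_conn, not_iso, by rw [Gg_DQ, Hh_DQ]; exact charpoly_eq⟩
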